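/- arXiv:cs/0509065 — 5 statements merged into one kernel-verified Lean document; each statement's English description precedes it below -/
import Mathlib

section
/- Let F be a field, d ≥ 1, and let f(x) = x^{d+2} be divided (in F[x]) by (x - x₁)(x - x₂)(x - 1) for indeterminates x₁, x₂. Then the coefficient of x² in the remainder equals Σ_{i+j ≤ d} x₁^i x₂^j. -/
open Polynomial

namespace Stmt0Aux

variable {R : Type*} [CommRing R] (u v : R)

noncomputable def gg (v : R) (m : ℕ) : R := ∑ j ∈ Finset.range (m + 1), v ^ j

noncomputable def hh (u v : R) (k : ℕ) : R :=
  ∑ i ∈ Finset.range (k + 1), ∑ j ∈ Finset.range (k + 1 - i), u ^ i * v ^ j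

lemma gg_rec (m : ℕ) : gg v (m + 1) = v * gg v m + 1 := by
  unfold gg
  rw [Finset.sum_range_succ']
  simp [Finset.mul_sum, pow_succ, mul_comm]

lemma hh_rec (k : ℕ) : hh u v (k + 1) = u * hh u v k + gg v (k + 1) := by
  unfold hh gg
  rw [Finset.sum_range_succ']
  simp only [Nat.succ_sub_succ_eq_sub, pow_zero, one_mul, Nat.sub_zero]
  congr 1
  rw [Finset.mul_sum]
  refine Finset.sum_congr rfl fun i _ => ?_
  rw [Finset.mul_sum]
  refine Finset.sum_congr rfl fun j _ => ?_
  ring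

lemma hh_newton (k : ℕ) :
    hh u v (k + 3) = (u + v + 1) * hh u v (k + 2) - (u * v + u + v) * hh u v (k + 1)
      + u * v * hh u v k := by
  have h1 := hh_rec u v (k + 2)
  have h2 := hh_rec u v (k + 1)
  have h3 := hh_rec u v k
  have g1 := gg_rec v (k + 2)
  have g2 := gg_rec v (k + 1)
  have e1 : k + 2 + 1 = k + 3 := rfl
  have e2 : k + 1 + 1 = k + 2 := rfl
  rw [e1] at h1 g1
  rw [e2] at h2 g2
  linear_combination h1 - (v + 1) * h2 + v * h3 + g1 - g2

noncomputable def Rp (u v : R) (d : ℕ) : Polynomial R :=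
  C (hh u v d) * X ^ 2 + C (hh u v (d + 1) - (u + v + 1) * hh u v d) * X
    + C (hh u v (d + 2) - (u + v + 1) * hh u v (d + 1) + (u * v + u + v) * hh u v d)

lemma hh_zero : hh u v 0 = 1 := by simp [hh]

lemma hh_one : hh u v 1 = 1 + v + u := by
  simp [hh, Finset.sum_range_succ]

lemma hh_two : hh u v 2 = 1 + v + v ^ 2 + (u + u * v) + u ^ 2 := by
  simp [hh, Finset.sum_range_succ]

lemma step (d : ℕ) :
    (X : R[X]) * Rp u v d - Rp u v (d + 1)
      = C (hh u v d) * ((X - C u) * (X - C v) * (X - 1)) := by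
  have hn := hh_newton u v d
  have hn2 : (C (hh u v (d + 3)) : R[X])
      = (C u + C v + 1) * C (hh u v (d + 2)) - (C u * C v + C u + C v) * C (hh u v (d + 1))
        + C u * C v * C (hh u v d) := by
    rw [hn]
    simp only [map_add, map_sub, map_mul, map_one]
  unfold Rp
  simp only [show d + 1 + 1 = d + 2 from rfl, show d + 1 + 2 = d + 3 from rfl,
    map_add, map_sub, map_mul, map_one]
  rw [hn2]
  ring

lemma dvd_key (d : ℕ) :
    ((X - C u) * (X - C v) * (X - 1) : R[X]) ∣ X ^ (d + 2) - Rp u v d := by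
  induction d with
  | zero =>
    have h0 : (X : R[X]) ^ (0 + 2) - Rp u v 0 = 0 := by
      unfold Rp
      rw [hh_zero, hh_one, hh_two]
      simp only [map_add, map_sub, map_mul, map_one, map_pow]
      ring
    rw [h0]
    exact dvd_zero _
  | succ n ih =>
    have h1 : (X : R[X]) ^ (n + 1 + 2) - Rp u v (n + 1)
        = X * (X ^ (n + 2) - Rp u v n) + (X * Rp u v n - Rp u v (n + 1)) := by ring
    rw [h1, step u v n]
    exact dvd_add (ih.mul_left X) (Dvd.intro_left _ rfl)

end Stmt0Aux

open Stmt0Aux in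
theorem stmt0 (F : Type*) [Field F] (d : ℕ) (hd : 1 ≤ d) :
    let K := FractionRing (MvPolynomial (Fin 2) F)
    let x₁ : K := algebraMap (MvPolynomial (Fin 2) F) K (MvPolynomial.X 0)
    let x₂ : K := algebraMap (MvPolynomial (Fin 2) F) K (MvPolynomial.X 1)
    ((X ^ (d + 2) : Polynomial K) %ₘ ((X - C x₁) * (X - C x₂) * (X - 1))).coeff 2 =
      ∑ i ∈ Finset.range (d + 1), ∑ j ∈ Finset.range (d + 1 - i), x₁ ^ i * x₂ ^ j := by
  intro K x₁ x₂
  set M : Polynomial K := (X - C x₁) * (X - C x₂) * (X - 1) with hM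
  have hone : (X - 1 : Polynomial K) = X - C 1 := by simp
  have hmonic : M.Monic := by
    rw [hM, hone]
    exact ((monic_X_sub_C x₁).mul (monic_X_sub_C x₂)).mul (monic_X_sub_C 1)
  have hdeg : M.degree = 3 := by
    rw [hM, hone, degree_mul, degree_mul, degree_X_sub_C, degree_X_sub_C, degree_X_sub_C]
    rfl
  have hR : (X ^ (d + 2) : Polynomial K) %ₘ M = Rp x₁ x₂ d := by
    obtain ⟨q, hq⟩ := dvd_key x₁ x₂ d
    have hsplit : (X ^ (d + 2) : Polynomial K) = M * q + Rp x₁ x₂ d := by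
      rw [← hq]; ring
    have hlt : (Rp x₁ x₂ d).degree < M.degree := by
      rw [hdeg]
      unfold Rp
      exact lt_of_le_of_lt degree_quadratic_le (by decide)
    rw [hsplit, Polynomial.add_modByMonic,
      (Polynomial.modByMonic_eq_zero_iff_dvd hmonic).mpr ⟨q, rfl⟩, zero_add,
      (Polynomial.modByMonic_eq_self_iff hmonic).mpr hlt]
  rw [hR]
  unfold Rp
  simp only [coeff_add, coeff_C_mul, coeff_X_pow, coeff_X, coeff_C]
  norm_num
  rfl
end

section
/- Let F be an algebraically closed field and f(x,y) = Σ_{i+j ≤ d} x^i y^j with d ≥ 1. If (x,y) ∈ F² satisfies f(x,y) = 0, ∂f/∂x(x,y) = 0, and ∂f/∂y(x,y) = 0, then (d+1)x^{d+1} = x^d + x^{d-1} + ⋯ + 1 and (d+1)y^{d+1} = y^d + ⋯ + 1 in F. -/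
/-!
Multiplying `f = ∑_{i+j ≤ d} x^i y^j` by `x - y` telescopes each homogeneous part into
`x^(k+1) - y^(k+1)`, so `(x - y) f = ∑_{k ≤ d} (x^(k+1) - y^(k+1))`. A singular point of `f` is
one of `(x - y) f`, hence `∑_{k ≤ d} (k+1) x^k = 0` there, and multiplying by `x - 1` gives
`(d+1) x^(d+1) = ∑_{k ≤ d} x^k`; likewise for `y`.
-/

open Finset MvPolynomial

section Triangle

variable {R : Type*} [CommRing R]

theorem sum_range_sum_range_pow_mul_pow_succ (x y : R) (n : ℕ) :
    ∑ i ∈ range (n + 2), ∑ j ∈ range (n + 2 - i), x ^ i * y ^ j =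
      ∑ i ∈ range (n + 1), ∑ j ∈ range (n + 1 - i), x ^ i * y ^ j +
        ∑ i ∈ range (n + 2), x ^ i * y ^ (n + 1 - i) := by
  have hrow : ∀ i ∈ range (n + 1), ∑ j ∈ range (n + 2 - i), x ^ i * y ^ j =
      ∑ j ∈ range (n + 1 - i), x ^ i * y ^ j + x ^ i * y ^ (n + 1 - i) := by
    intro i hi
    rw [show n + 2 - i = n + 1 - i + 1 by grind, sum_range_succ]
  rw [sum_range_succ, sum_range_succ (fun i => x ^ i * y ^ (n + 1 - i)), sum_congr rfl hrow,
    sum_add_distrib, show n + 2 - (n + 1) = 1 by omega, Nat.sub_self, sum_range_one]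
  abel

theorem sub_mul_sum_range_sum_range_pow_mul_pow (x y : R) (n : ℕ) :
    (x - y) * ∑ i ∈ range (n + 1), ∑ j ∈ range (n + 1 - i), x ^ i * y ^ j =
      ∑ k ∈ range (n + 1), (x ^ (k + 1) - y ^ (k + 1)) := by
  induction n with
  | zero => simp
  | succ n ih =>
    have hdiag : (x - y) * ∑ i ∈ range (n + 2), x ^ i * y ^ (n + 1 - i) =
        x ^ (n + 2) - y ^ (n + 2) := by
      rw [mul_comm]
      exact geom_sum₂_mul x y (n + 2)
    rw [sum_range_sum_range_pow_mul_pow_succ, mul_add, ih, hdiag, ← sum_range_succ]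

theorem sub_one_mul_sum_range_succ_mul_pow (x : R) (n : ℕ) :
    (x - 1) * ∑ k ∈ range (n + 1), ((k : R) + 1) * x ^ k =
      ((n : R) + 1) * x ^ (n + 1) - ∑ k ∈ range (n + 1), x ^ k := by
  induction n with
  | zero => simp
  | succ n ih =>
    rw [sum_range_succ, mul_add, ih, sum_range_succ _ (n + 1)]
    push_cast
    ring

end Triangle

theorem MvPolynomial.eval_pderiv_mul_eq_zero {R σ : Type*} [CommRing R] {p : σ → R} {i : σ}
    {f : MvPolynomial σ R} (h₀ : eval p f = 0) (hᵢ : eval p (pderiv i f) = 0)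
    (g : MvPolynomial σ R) : eval p (pderiv i (g * f)) = 0 := by
  simp [Derivation.leibniz, h₀, hᵢ]

theorem stmt2_general (F : Type*) [Field F] (d : ℕ) (x y : F)
    (f : MvPolynomial (Fin 2) F)
    (hf : f = ∑ i ∈ Finset.range (d + 1), ∑ j ∈ Finset.range (d + 1 - i),
      MvPolynomial.X 0 ^ i * MvPolynomial.X 1 ^ j)
    (h0 : MvPolynomial.eval ![x, y] f = 0)
    (hx : MvPolynomial.eval ![x, y] (MvPolynomial.pderiv 0 f) = 0)
    (hy : MvPolynomial.eval ![x, y] (MvPolynomial.pderiv 1 f) = 0) :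
    (d + 1 : F) * x ^ (d + 1) = ∑ i ∈ Finset.range (d + 1), x ^ i ∧
    (d + 1 : F) * y ^ (d + 1) = ∑ i ∈ Finset.range (d + 1), y ^ i := by
  have key : (X 0 - X 1) * f = ∑ k ∈ range (d + 1), (X 0 ^ (k + 1) - X 1 ^ (k + 1)) := by
    rw [hf, sub_mul_sum_range_sum_range_pow_mul_pow]
  have hx' : ∑ k ∈ range (d + 1), ((k : F) + 1) * x ^ k = 0 := by
    have h := eval_pderiv_mul_eq_zero h0 hx (X 0 - X 1)
    simpa [key, pderiv_X_of_ne] using h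
  have hy' : ∑ k ∈ range (d + 1), ((k : F) + 1) * y ^ k = 0 := by
    have h := eval_pderiv_mul_eq_zero h0 hy (X 0 - X 1)
    simpa [key, pderiv_X_of_ne] using h
  constructor
  · linear_combination -sub_one_mul_sum_range_succ_mul_pow x d + (x - 1) * hx'
  · linear_combination -sub_one_mul_sum_range_succ_mul_pow y d + (y - 1) * hy'

theorem stmt2 (F : Type*) [Field F] [IsAlgClosed F] (d : ℕ) (hd : 1 ≤ d) (x y : F)
    (f : MvPolynomial (Fin 2) F)
    (hf : f = ∑ i ∈ Finset.range (d + 1), ∑ j ∈ Finset.range (d + 1 - i),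
      MvPolynomial.X 0 ^ i * MvPolynomial.X 1 ^ j)
    (h0 : MvPolynomial.eval ![x, y] f = 0)
    (hx : MvPolynomial.eval ![x, y] (MvPolynomial.pderiv 0 f) = 0)
    (hy : MvPolynomial.eval ![x, y] (MvPolynomial.pderiv 1 f) = 0) :
    (d + 1 : F) * x ^ (d + 1) = ∑ i ∈ Finset.range (d + 1), x ^ i ∧
    (d + 1 : F) * y ^ (d + 1) = ∑ i ∈ Finset.range (d + 1), y ^ i :=
  stmt2_general F d x y f hf h0 hx hy
end

section
/- Let F be a field and L ∈ F[x₁,…,x_n] a nonzero polynomial of total degree d. Write L = F_d + F_{d-1} + ⋯ + F_0 where F_i is the homogeneous component of degree i. If F_d is irreducible over the algebraic closure of F, then L is irreducible over the algebraic closure of F. -/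
/-!
The top homogeneous component is multiplicative over a domain: if `p = a * b`, then the
component of `p` of degree `deg a + deg b = deg p` is the product of the top components of `a`
and `b`, since every other product of coefficients involves a monomial of `a` or `b` above its
total degree. So a factorisation of `L` over the algebraic closure yields one of `F_d`, in which
one factor is a unit, hence of degree `0`; the corresponding factor of `L` is then a constant
equal to that unit.
-/

namespace MvPolynomial

variable {σ R : Type*}

section CommSemiring

variable [CommSemiring R]

theorem homogeneousComponent_add_mul_of_totalDegree_le {f g : MvPolynomial σ R} {p q : ℕ}
    (hf : f.totalDegree ≤ p) (hg : g.totalDegree ≤ q) :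
    homogeneousComponent (p + q) (f * g) = homogeneousComponent p f * homogeneousComponent q g := by
  classical
  ext m
  rw [coeff_homogeneousComponent]
  split_ifs with hm
  · rw [coeff_mul, coeff_mul]
    refine Finset.sum_congr rfl fun x hx => ?_
    rw [Finset.HasAntidiagonal.mem_antidiagonal] at hx
    rw [← hx, map_add] at hm
    simp only [coeff_homogeneousComponent]
    rcases trichotomy_of_add_eq_add hm with h | h | h
    · rw [if_pos h.1, if_pos h.2]
    · rw [if_neg h.ne, zero_mul, coeff_eq_zero_of_totalDegree_lt
        (show g.totalDegree < x.2.degree by omega), mul_zero]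
    · rw [if_neg h.ne, mul_zero, coeff_eq_zero_of_totalDegree_lt
        (show f.totalDegree < x.1.degree by omega), zero_mul]
  · exact ((homogeneousComponent_isHomogeneous p f).mul
      (homogeneousComponent_isHomogeneous q g) |>.coeff_eq_zero hm).symm

theorem homogeneousComponent_map {S : Type*} [CommSemiring S] (f : R →+* S) (k : ℕ)
    (p : MvPolynomial σ R) :
    homogeneousComponent k (map f p) = map f (homogeneousComponent k p) := by
  ext m
  simp only [coeff_map, coeff_homogeneousComponent]
  split_ifs <;> simp

theorem totalDegree_map_of_injective {S : Type*} [CommSemiring S] {f : R →+* S}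
    (hf : Function.Injective f) (p : MvPolynomial σ R) :
    (map f p).totalDegree = p.totalDegree := by
  rw [totalDegree_eq, totalDegree_eq, support_map_of_injective p hf]

theorem homogeneousComponent_zero_eq_self_of_totalDegree_eq_zero {p : MvPolynomial σ R}
    (hp : p.totalDegree = 0) : homogeneousComponent 0 p = p :=
  homogeneousComponent_eq_self (isHomogeneous_of_totalDegree_zero σ hp)

end CommSemiring

section IsDomain

variable [CommRing R] [IsDomain R]

theorem totalDegree_eq_zero_of_isUnit {p : MvPolynomial σ R} (hp : IsUnit p) :
    p.totalDegree = 0 :=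
  (isUnit_iff_totalDegree_of_isReduced.mp hp).2

theorem isUnit_of_isUnit_homogeneousComponent_totalDegree {p : MvPolynomial σ R}
    (h : IsUnit (homogeneousComponent p.totalDegree p)) : IsUnit p := by
  have hdeg : p.totalDegree = 0 := by
    rw [← (homogeneousComponent_isHomogeneous p.totalDegree p).totalDegree h.ne_zero]
    exact totalDegree_eq_zero_of_isUnit h
  rwa [hdeg, homogeneousComponent_zero_eq_self_of_totalDegree_eq_zero hdeg] at h

theorem irreducible_of_irreducible_homogeneousComponent_totalDegree {p : MvPolynomial σ R}
    (h : Irreducible (homogeneousComponent p.totalDegree p)) : Irreducible p := by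
  refine ⟨fun hp => h.not_isUnit ?_, fun a b hab => ?_⟩
  · have hdeg := totalDegree_eq_zero_of_isUnit hp
    rwa [hdeg, homogeneousComponent_zero_eq_self_of_totalDegree_eq_zero hdeg]
  · have hp : p ≠ 0 := by
      rintro rfl
      exact h.ne_zero (by simp)
    have ha : a ≠ 0 := by rintro rfl; simp_all
    have hb : b ≠ 0 := by rintro rfl; simp_all
    rw [hab, totalDegree_mul_of_isDomain ha hb,
      homogeneousComponent_add_mul_of_totalDegree_le le_rfl le_rfl] at h
    exact (h.isUnit_or_isUnit rfl).imp isUnit_of_isUnit_homogeneousComponent_totalDegree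
      isUnit_of_isUnit_homogeneousComponent_totalDegree

end IsDomain

end MvPolynomial

open MvPolynomial in
theorem stmt5_general (F : Type*) [Field F] (n d : ℕ) (L : MvPolynomial (Fin n) F)
    (hdeg : L.totalDegree = d)
    (hirr : Irreducible (MvPolynomial.map (algebraMap F (AlgebraicClosure F))
      (MvPolynomial.homogeneousComponent d L))) :
    Irreducible (MvPolynomial.map (algebraMap F (AlgebraicClosure F)) L) := by
  apply irreducible_of_irreducible_homogeneousComponent_totalDegree
  rwa [totalDegree_map_of_injective (algebraMap F _).injective, hdeg, homogeneousComponent_map]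

theorem stmt5 (F : Type*) [Field F] (n d : ℕ) (L : MvPolynomial (Fin n) F)
    (hL : L ≠ 0) (hdeg : L.totalDegree = d)
    (hirr : Irreducible (MvPolynomial.map (algebraMap F (AlgebraicClosure F))
      (MvPolynomial.homogeneousComponent d L))) :
    Irreducible (MvPolynomial.map (algebraMap F (AlgebraicClosure F)) L) :=
  stmt5_general F n d L hdeg hirr
end

section
/- Let F be a field, k ≥ 1, d ≥ 1, and let f_c(x) = x^{k+d} + f_{d-1}x^{k+d-1} + ⋯ + f_0 x^k ∈ F[x]. Let L_{f_0,…,f_{d-1}}(x₁,…,x_{k+1}) denote the coefficient of x^k in the remainder of f_c divided by ∏_{i=1}^{k+1}(x - x_i), viewed as a polynomial in F[x₁,…,x_{k+1}]. Then L has total degree at most d, and its homogeneous component of degree d equals L_{0,…,0}, the corresponding coefficient for f(x) = x^{k+d}. -/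
/-!
Give `x` weight one, so that `F[x₁, …, x_{k+1}][x]` becomes the polynomial ring in `k + 2`
variables with its usual grading. Then `P = ∏ (x - xᵢ)` is homogeneous of degree `k + 1`, and
the remainder `rₙ` of `x ^ (k + n)` modulo `P` is homogeneous of degree `k + n`, because
`r_{n+1} = x rₙ - gₙ P`, where `gₙ` is the coefficient of `x ^ k` in `rₙ`. Hence `gₙ` is
homogeneous of degree `n`, and `L = g_d + ∑_{i<d} fᵢ gᵢ` with `L₀ = g_d`.
-/

open Polynomial

namespace Polynomial

variable {R : Type*} [CommRing R]

theorem X_mul_modByMonic {Q : R[X]} (hQ : Q.Monic) {m : ℕ} (hQdeg : Q.natDegree = m + 1)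
    (p : R[X]) : (X * p) %ₘ Q = X * (p %ₘ Q) - C ((p %ₘ Q).coeff m) * Q := by
  nontriviality R
  set r := p %ₘ Q
  have hQdeg' : Q.degree = (m + 1 : ℕ) := by rw [degree_eq_natDegree hQ.ne_zero, hQdeg]
  have hr : r.degree < (m + 1 : ℕ) := hQdeg' ▸ degree_modByMonic_lt p hQ
  refine (div_modByMonic_unique (X * (p /ₘ Q) + C (r.coeff m)) _ hQ ⟨?_, ?_⟩).2
  · linear_combination X * modByMonic_add_div p Q
  · rw [hQdeg', degree_lt_iff_coeff_zero]
    intro j hj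
    replace hj : m + 1 ≤ j := by exact_mod_cast hj
    rcases j with _ | t
    · omega
    rw [coeff_sub, coeff_X_mul, coeff_C_mul]
    rcases (show m ≤ t by omega).eq_or_lt with rfl | hlt
    · rw [← hQdeg, hQ.coeff_natDegree, mul_one, sub_self]
    · have hrt : r.coeff t = 0 := coeff_eq_zero_of_degree_lt (hr.trans_le (by exact_mod_cast hlt))
      have hQt : Q.coeff (t + 1) = 0 := coeff_eq_zero_of_natDegree_lt (by omega)
      rw [hrt, hQt, mul_zero, sub_zero]

end Polynomial

namespace MvPolynomial

section WeightedHomogeneous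

/- Homogeneity in `(MvPolynomial (Fin N) F)[X]` with `X` of weight one is expressed through
`finSuccEquiv`, which turns `X` into the variable `X 0`. -/

variable {F : Type*} [CommRing F] {N : ℕ}

theorem finSuccEquiv_rename_succ (c : MvPolynomial (Fin N) F) :
    finSuccEquiv F N (rename Fin.succ c) = Polynomial.C c := by
  induction c using MvPolynomial.induction_on with
  | C a => simp [finSuccEquiv_apply]
  | add p q hp hq => simp [hp, hq]
  | mul_X p i hp => simp [hp, finSuccEquiv_X_succ]

theorem finSuccEquiv_symm_X : (finSuccEquiv F N).symm Polynomial.X = X 0 := by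
  rw [← finSuccEquiv_X_zero, AlgEquiv.symm_apply_apply]

theorem isHomogeneous_finSuccEquiv_symm_C {c : MvPolynomial (Fin N) F} {n : ℕ}
    (hc : c.IsHomogeneous n) : ((finSuccEquiv F N).symm (Polynomial.C c)).IsHomogeneous n := by
  rw [← finSuccEquiv_rename_succ, AlgEquiv.symm_apply_apply]
  exact hc.rename_isHomogeneous

theorem isHomogeneous_finSuccEquiv_symm_prod_X_sub_C {ι : Type*} (s : Finset ι)
    {v : ι → MvPolynomial (Fin N) F} (hv : ∀ i, (v i).IsHomogeneous 1) :
    ((finSuccEquiv F N).symm (∏ i ∈ s, (Polynomial.X - Polynomial.C (v i)))).IsHomogeneous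
      s.card := by
  rw [map_prod, Finset.card_eq_sum_ones]
  refine IsHomogeneous.prod _ _ _ fun i _ => ?_
  rw [map_sub, finSuccEquiv_symm_X]
  exact (isHomogeneous_X F 0).sub (isHomogeneous_finSuccEquiv_symm_C (hv i))

theorem isHomogeneous_finSuccEquiv_symm_X_pow_modByMonic
    {Q : (MvPolynomial (Fin N) F)[X]} (hQ : Q.Monic) {m : ℕ} (hQdeg : Q.natDegree = m + 1)
    (hQh : ((finSuccEquiv F N).symm Q).IsHomogeneous (m + 1)) (n : ℕ) :
    ((finSuccEquiv F N).symm (Polynomial.X ^ (m + n) %ₘ Q)).IsHomogeneous (m + n) := by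
  induction n with
  | zero =>
    have hdeg : (Polynomial.X ^ m : (MvPolynomial (Fin N) F)[X]).degree < Q.degree :=
      degree_lt_degree ((natDegree_X_pow_le m).trans_lt (hQdeg ▸ m.lt_succ_self))
    rw [add_zero, (div_modByMonic_unique 0 _ hQ ⟨by rw [mul_zero, add_zero], hdeg⟩).2, map_pow,
      finSuccEquiv_symm_X]
    exact isHomogeneous_X_pow 0 m
  | succ n ih =>
    have hc : ((Polynomial.X ^ (m + n) %ₘ Q).coeff m).IsHomogeneous n := by
      simpa using ih.finSuccEquiv_coeff_isHomogeneous m n rfl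
    rw [← add_assoc, pow_succ', X_mul_modByMonic hQ hQdeg, map_sub, map_mul, map_mul,
      finSuccEquiv_symm_X]
    refine IsHomogeneous.sub ?_ ?_
    · exact add_comm (m + n) 1 ▸ (isHomogeneous_X F 0).mul ih
    · exact (by omega : n + (m + 1) = m + n + 1) ▸ (isHomogeneous_finSuccEquiv_symm_C hc).mul hQh

theorem isHomogeneous_coeff_X_pow_modByMonic_prod_X_sub_C [Nontrivial F] (k n : ℕ) :
    ((Polynomial.X ^ (k + n) %ₘ ∏ i : Fin (k + 1), (Polynomial.X - Polynomial.C (X i))).coeff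
      k : MvPolynomial (Fin (k + 1)) F).IsHomogeneous n := by
  have hmonic := monic_prod_of_monic Finset.univ _ fun (i : Fin (k + 1)) _ =>
    monic_X_sub_C (X i : MvPolynomial (Fin (k + 1)) F)
  have hdeg : (∏ i : Fin (k + 1), (Polynomial.X - Polynomial.C (X i) :
      (MvPolynomial (Fin (k + 1)) F)[X])).natDegree = k + 1 := by
    rw [natDegree_prod_of_monic _ _ fun i _ => monic_X_sub_C _]
    simp
  have hhom := isHomogeneous_finSuccEquiv_symm_prod_X_sub_C (N := k + 1) Finset.univ
    (isHomogeneous_X F)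
  rw [Finset.card_univ, Fintype.card_fin] at hhom
  simpa using (isHomogeneous_finSuccEquiv_symm_X_pow_modByMonic hmonic hdeg hhom n
    ).finSuccEquiv_coeff_isHomogeneous k n rfl

end WeightedHomogeneous

section LowerOrderTerms

variable {σ F : Type*} [CommSemiring F] {d : ℕ} {p : MvPolynomial σ F}
  {q : Fin d → MvPolynomial σ F}

theorem totalDegree_add_sum_le (hp : p.IsHomogeneous d) (hq : ∀ i, (q i).IsHomogeneous i) :
    (p + ∑ i, q i).totalDegree ≤ d :=
  (totalDegree_add _ _).trans <| max_le hp.totalDegree_le <| (totalDegree_finsetSum _ _).trans <|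
    Finset.sup_le fun i _ => (hq i).totalDegree_le.trans i.is_lt.le

theorem homogeneousComponent_add_sum (hp : p.IsHomogeneous d)
    (hq : ∀ i, (q i).IsHomogeneous i) : homogeneousComponent d (p + ∑ i, q i) = p := by
  rw [map_add, homogeneousComponent_of_mem hp, if_pos rfl, map_sum, Finset.sum_eq_zero
    fun i _ => homogeneousComponent_eq_zero _ _ ((hq i).totalDegree_le.trans_lt i.is_lt), add_zero]

end LowerOrderTerms

end MvPolynomial

theorem stmt15_general (F : Type*) [Field F] (k d : ℕ)
    (f : Fin d → F) :
    let R := MvPolynomial (Fin (k + 1)) F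
    let K := FractionRing R
    let φ : R →+* K := algebraMap R K
    let P : Polynomial K := ∏ i, (Polynomial.X - Polynomial.C (φ (MvPolynomial.X i)))
    let fc : Polynomial K := Polynomial.X ^ (k + d) +
      ∑ i : Fin d, Polynomial.C (φ (MvPolynomial.C (f i))) * Polynomial.X ^ (k + (i : ℕ))
    ∃ L L0 : R,
      φ L = (fc %ₘ P).coeff k ∧
      φ L0 = ((Polynomial.X ^ (k + d) : Polynomial K) %ₘ P).coeff k ∧
      L.totalDegree ≤ d ∧
      MvPolynomial.homogeneousComponent d L = L0 := by
  intro R K φ P fc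
  set P₀ : R[X] := ∏ i, (X - C (MvPolynomial.X i))
  have hrem (n : ℕ) : ((X ^ n : K[X]) %ₘ P).coeff k = φ ((X ^ n %ₘ P₀).coeff k) := by
    have hP : P = P₀.map φ := by simp [P, P₀, Polynomial.map_prod]
    rw [hP, ← Polynomial.map_X φ, ← Polynomial.map_pow,
      ← map_modByMonic φ (monic_prod_of_monic _ _ fun i _ => monic_X_sub_C _), coeff_map]
  have hfc : (fc %ₘ P).coeff k = (X ^ (k + d) %ₘ P).coeff k +
      ∑ i, φ (MvPolynomial.C (f i)) * (X ^ (k + (i : ℕ)) %ₘ P).coeff k := by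
    simp only [fc, ← modByMonicHom_apply, map_add, map_sum, ← smul_eq_C_mul, map_smul,
      coeff_add, finsetSum_coeff, coeff_smul, smul_eq_mul]
  set g : ℕ → R := fun n => (X ^ (k + n) %ₘ P₀).coeff k
  have hg (n : ℕ) : (g n).IsHomogeneous n :=
    MvPolynomial.isHomogeneous_coeff_X_pow_modByMonic_prod_X_sub_C k n
  have hgC (i : Fin d) : (MvPolynomial.C (f i) * g i).IsHomogeneous i := (hg i).C_mul _
  refine ⟨g d + ∑ i, MvPolynomial.C (f i) * g i, g d, ?_, (hrem _).symm,
    MvPolynomial.totalDegree_add_sum_le (hg d) hgC,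
    MvPolynomial.homogeneousComponent_add_sum (hg d) hgC⟩
  simp only [hfc, hrem, map_add, map_sum, map_mul, g]

theorem stmt15 (F : Type*) [Field F] (k d : ℕ) (hk : 1 ≤ k) (hd : 1 ≤ d)
    (f : Fin d → F) :
    let R := MvPolynomial (Fin (k + 1)) F
    let K := FractionRing R
    let φ : R →+* K := algebraMap R K
    let P : Polynomial K := ∏ i, (Polynomial.X - Polynomial.C (φ (MvPolynomial.X i)))
    let fc : Polynomial K := Polynomial.X ^ (k + d) +
      ∑ i : Fin d, Polynomial.C (φ (MvPolynomial.C (f i))) * Polynomial.X ^ (k + (i : ℕ))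
    ∃ L L0 : R,
      φ L = (fc %ₘ P).coeff k ∧
      φ L0 = ((Polynomial.X ^ (k + d) : Polynomial K) %ₘ P).coeff k ∧
      L.totalDegree ≤ d ∧
      MvPolynomial.homogeneousComponent d L = L0 :=
  stmt15_general F k d f
end

section
/- Let q be a prime power, A ⊆ F_q of size n, 1 ≤ k < n, C = {(t(a))_{a∈A} : deg t ≤ k-1}, and w = (w(a))_{a∈A} for w(x) ∈ F_q[x] of degree k+d with d ≥ 1 and leading coefficient 1. Then d(w, C) ≤ n - k - 1 if and only if there exist k+1 distinct elements a₁,…,a_{k+1} ∈ A such that the remainder of w(x) upon division by ∏_{i=1}^{k+1}(x - a_i) has degree ≤ k - 1. -/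
/-!
The codeword of a polynomial `t` of degree `< k` is within distance `n - k - 1` of `p` exactly
when the two agree on some `k + 1` points `S ⊆ A`. Since a polynomial of degree `< #S` is
determined by its values on `S`, agreement on `S` with such a `t` means
`t = p %ₘ ∏ a ∈ S, (X - C a)`.
-/

open Polynomial Finset

theorem hammingDist_restrict_eq_card_filter_ne {α β : Type*} [DecidableEq β] (A : Finset α)
    (f g : α → β) :
    hammingDist (fun a : A => f a) (fun a : A => g a) = #{a ∈ A | f a ≠ g a} := by
  rw [hammingDist, ← card_map (Function.Embedding.subtype _)]
  congr 1
  ext a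
  simp [and_comm]

theorem exists_subset_card_eq_eqOn_iff_add_hammingDist_le {α β : Type*} [DecidableEq β]
    (A : Finset α) (f g : α → β) (m : ℕ) :
    (∃ S ⊆ A, #S = m ∧ ∀ a ∈ S, f a = g a) ↔
      m + hammingDist (fun a : A => f a) (fun a : A => g a) ≤ #A := by
  rw [hammingDist_restrict_eq_card_filter_ne]
  have hsplit : #{a ∈ A | f a = g a} + #{a ∈ A | f a ≠ g a} = #A :=
    card_filter_add_card_filter_not _
  constructor
  · rintro ⟨S, hSA, rfl, hS⟩
    have : #S ≤ #{a ∈ A | f a = g a} :=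
      card_le_card fun a ha => mem_filter.2 ⟨hSA ha, hS a ha⟩
    omega
  · intro hm
    obtain ⟨S, hS, rfl⟩ := exists_subset_card_eq (s := {a ∈ A | f a = g a}) (n := m) (by omega)
    exact ⟨S, hS.trans (filter_subset _ _), rfl, fun a ha => (mem_filter.1 (hS ha)).2⟩

namespace Polynomial

theorem eval_modByMonic_prod_X_sub_C_of_mem {R : Type*} [CommRing R] (p : R[X]) {s : Finset R}
    {a : R} (ha : a ∈ s) : (p %ₘ ∏ b ∈ s, (X - C b)).eval a = p.eval a :=
  eval₂_modByMonic_eq_self_of_root <| by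
    rw [← eval, eval_prod]
    exact prod_eq_zero ha (by simp)

variable {R : Type*} [CommRing R] [IsDomain R]

theorem modByMonic_prod_X_sub_C_eq_of_eval_eq {s : Finset R} {p t : R[X]}
    (ht : t.degree < #s) (h : ∀ a ∈ s, p.eval a = t.eval a) :
    p %ₘ ∏ a ∈ s, (X - C a) = t := by
  have hmonic : (∏ a ∈ s, (X - C a)).Monic := monic_prod_of_monic _ _ fun a _ => monic_X_sub_C a
  refine eq_of_degree_sub_lt_of_eval_finset_eq s ?_ fun a ha => ?_
  · refine (degree_sub_le _ _).trans_lt (max_lt ?_ ht)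
    simpa [degree_prod, hmonic.ne_zero] using degree_modByMonic_lt p hmonic
  · rw [eval_modByMonic_prod_X_sub_C_of_mem p ha, h a ha]

theorem degree_modByMonic_prod_X_sub_C_lt_iff {s : Finset R} {p : R[X]} {m : ℕ}
    (hm : m ≤ #s) :
    (p %ₘ ∏ a ∈ s, (X - C a)).degree < m ↔
      ∃ t : R[X], t.degree < m ∧ ∀ a ∈ s, p.eval a = t.eval a := by
  refine ⟨fun h => ⟨_, h, fun a ha => (eval_modByMonic_prod_X_sub_C_of_mem p ha).symm⟩, ?_⟩
  rintro ⟨t, ht, hpt⟩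
  rwa [modByMonic_prod_X_sub_C_eq_of_eval_eq (ht.trans_le (by exact_mod_cast hm)) hpt]

end Polynomial

theorem stmt18_general (Fq : Type*) [Field Fq] [DecidableEq Fq]
    (A : Finset Fq) (n k : ℕ) (hn : A.card = n) (hkn : k < n)
    (p : Polynomial Fq) :
    (∃ t : Polynomial Fq, t.degree < (k : ℕ) ∧
        hammingDist (fun a : ↥A => p.eval (a : Fq)) (fun a : ↥A => t.eval (a : Fq)) ≤
          n - k - 1) ↔
      ∃ S : Finset Fq, S ⊆ A ∧ S.card = k + 1 ∧
        (p %ₘ ∏ a ∈ S, (X - C a)).degree < (k : ℕ) := by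
  have hdist : ∀ t : Fq[X],
      hammingDist (fun a : ↥A => p.eval (a : Fq)) (fun a : ↥A => t.eval (a : Fq)) ≤ n - k - 1 ↔
        ∃ S ⊆ A, #S = k + 1 ∧ ∀ a ∈ S, p.eval a = t.eval a := fun t => by
    rw [exists_subset_card_eq_eqOn_iff_add_hammingDist_le, hn]
    omega
  simp only [hdist]
  constructor
  · rintro ⟨t, ht, S, hSA, hS, hpt⟩
    exact ⟨S, hSA, hS, (degree_modByMonic_prod_X_sub_C_lt_iff (by omega)).2 ⟨t, ht, hpt⟩⟩
  · rintro ⟨S, hSA, hS, hdeg⟩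
    obtain ⟨t, ht, hpt⟩ := (degree_modByMonic_prod_X_sub_C_lt_iff (by omega)).1 hdeg
    exact ⟨t, ht, S, hSA, hS, hpt⟩

theorem stmt18 (Fq : Type*) [Field Fq] [Fintype Fq] [DecidableEq Fq]
    (A : Finset Fq) (n k d : ℕ) (hn : A.card = n) (hk : 1 ≤ k) (hkn : k < n)
    (hd : 1 ≤ d) (p : Polynomial Fq) (hm : p.Monic) (hdeg : p.natDegree = k + d) :
    (∃ t : Polynomial Fq, t.degree < (k : ℕ) ∧
        hammingDist (fun a : ↥A => p.eval (a : Fq)) (fun a : ↥A => t.eval (a : Fq)) ≤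
          n - k - 1) ↔
      ∃ S : Finset Fq, S ⊆ A ∧ S.card = k + 1 ∧
        (p %ₘ ∏ a ∈ S, (X - C a)).degree < (k : ℕ) :=
  stmt18_general Fq A n k hn hkn p
end
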